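/- Let g be a finite-dimensional real Lie algebra, φ: g → g a Lie algebra automorphism, A = φ − id, h = ker A (the fixed-point subalgebra of φ), and g₀ = ⋃_{n≥1} ker(Aⁿ) the Fitting null component of A. Then the following conditions are equivalent: (1) h = g₀; (2) g = h ⊕ A(g) as vector spaces; (3) the restriction of A to A(g) is injective; (4) for every X ∈ g, A²X = 0 implies AX = 0; (5) h = ker(φ_s − id), where φ_s is the semisimple part of φ, i.e., the unique semisimple endomorphism commuting with φ such that φ − φ_s is nilpotent. (These are the equivalent defining conditions for a homogeneous Φ-space to be a regular Φ-space.) -/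

import Mathlib

/-!
Conditions (2)–(4) all say that `ker A ∩ im A = 0`, i.e. `ker A² = ker A`, and so does (1), since
the kernels of the powers of `A` stabilise as soon as two consecutive ones agree. For (5), write
`φ = φₛ + n` (Jordan–Chevalley). On the Fitting null component of `A` the semisimple operator
`φₛ - 1` is nilpotent, hence zero; conversely, on `ker (φₛ - 1)` the operator `A = (φₛ - 1) + n`
acts as the nilpotent `n`. Hence `g₀ = ker (φₛ - 1)`, and (5) is a restatement of (1).
-/

/-- An endomorphism is semisimple if every invariant subspace has an
invariant complement. -/
def IsSemisimpleEnd {g : Type*} [AddCommGroup g] [Module ℝ g]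
    (S : Module.End ℝ g) : Prop :=
  ∀ p : Submodule ℝ g, (∀ x ∈ p, S x ∈ p) →
    ∃ q : Submodule ℝ g, (∀ x ∈ q, S x ∈ q) ∧ IsCompl p q

open LinearMap

lemma isSemisimpleEnd_iff {g : Type*} [AddCommGroup g] [Module ℝ g] (S : Module.End ℝ g) :
    IsSemisimpleEnd S ↔ S.IsSemisimple := by
  simp only [IsSemisimpleEnd, Module.End.isSemisimple_iff, Module.End.mem_invtSubmodule,
    SetLike.le_def, Submodule.mem_comap]

namespace Module.End

variable {R M : Type*} [CommRing R] [AddCommGroup M] [Module R M]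

lemma iSup_ker_pow_succ_eq_maxGenEigenspace_zero (f : End R M) :
    ⨆ n : ℕ, ker (f ^ (n + 1)) = f.maxGenEigenspace 0 := by
  rw [← iSup_genEigenspace_eq]
  simp only [genEigenspace_zero_nat]
  exact f.iterateKer.monotone.iSup_nat_add 1

lemma maxGenEigenspace_eq_eigenspace_of_isNilpotent_sub {f s : End R M} (hfs : Commute f s)
    (hs : s.IsFinitelySemisimple) (hnil : IsNilpotent (f - s)) (μ : R) :
    f.maxGenEigenspace μ = s.eigenspace μ := by
  refine le_antisymm (fun m hm ↦ mem_eigenspace_iff.mpr ?_) ?_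
  · exact apply_eq_of_mem_of_comm_of_isFinitelySemisimple_of_isNil hm hfs hs hnil
  · have hnil_top : (f - s).maxGenEigenspace 0 = ⊤ := by
      obtain ⟨k, hk⟩ := hnil
      refine eq_top_iff.mpr fun m _ ↦ (mem_maxGenEigenspace _ _ _).mpr ⟨k, ?_⟩
      simp [hk]
    have := genEigenspace_inf_le_add s (f - s) μ 0 1 ⊤ (hfs.symm.sub_right (Commute.refl s))
    simpa [hnil_top] using this

lemma ker_sub_one_eq_iSup_ker_pow_succ {f s : End R M} (hfs : Commute f s)
    (hs : s.IsSemisimple) (hnil : IsNilpotent (f - s)) :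
    ker (s - 1) = ⨆ n : ℕ, ker ((f - 1) ^ (n + 1)) := by
  have hs₁ : (s - 1).IsFinitelySemisimple := by
    have := (isSemisimple_sub_algebraMap_iff (μ := (1 : R))).mpr hs
    rw [map_one] at this
    exact this.isFinitelySemisimple
  rw [iSup_ker_pow_succ_eq_maxGenEigenspace_zero, ← eigenspace_zero,
    maxGenEigenspace_eq_eigenspace_of_isNilpotent_sub _ hs₁ (by simpa using hnil)]
  exact (hfs.sub_left (Commute.one_left s)).sub_right (Commute.one_right _)

lemma ker_eq_iSup_ker_pow_succ_iff {K V : Type*} [DivisionRing K] [AddCommGroup V] [Module K V]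
    (f : End K V) :
    ker f = ⨆ n : ℕ, ker (f ^ (n + 1)) ↔ ∀ x, f (f x) = 0 → f x = 0 := by
  constructor
  · intro h x hx
    have : x ∈ ⨆ n : ℕ, ker (f ^ (n + 1)) := Submodule.mem_iSup_of_mem 1 (by simpa [pow_two])
    rwa [← h] at this
  · intro h
    have h₂ : ker (f ^ 1) = ker (f ^ (1 + 1)) := by
      refine le_antisymm (ker_le_ker_comp _ _) fun x hx ↦ ?_
      simpa using h x (by simpa [pow_two] using hx)
    simp_rw [add_comm _ 1, ← ker_pow_constant h₂, pow_one, iSup_const]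

lemma disjoint_ker_range_iff (f : End R M) :
    Disjoint (ker f) (range f) ↔ ∀ x, f (f x) = 0 → f x = 0 := by
  simp only [Submodule.disjoint_def, mem_ker, mem_range, forall_exists_index]
  exact ⟨fun h x hx ↦ h _ hx x rfl, fun h _ hx x hx' ↦ hx' ▸ h x (hx' ▸ hx)⟩

lemma isCompl_ker_range_iff {K V : Type*} [DivisionRing K] [AddCommGroup V] [Module K V]
    [FiniteDimensional K V] (f : End K V) :
    IsCompl (ker f) (range f) ↔ Disjoint (ker f) (range f) :=
  Submodule.isCompl_iff_disjoint _ _ (by rw [add_comm, finrank_range_add_finrank_ker])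

theorem exists_isSemisimple_commute_isNilpotent_sub {K V : Type*} [Field K] [PerfectField K]
    [AddCommGroup V] [Module K V] [FiniteDimensional K V] (f : End K V) :
    ∃ s : End K V, s.IsSemisimple ∧ Commute f s ∧ IsNilpotent (f - s) := by
  obtain ⟨n, -, s, hs, hn, hss, rfl⟩ := exists_isNilpotent_isSemisimple (K := K) (f := f)
  exact ⟨s, hss, Algebra.commute_of_mem_adjoin_self hs, by simpa using hn⟩

end Module.End

theorem stmt_2 (g : Type*) [LieRing g] [LieAlgebra ℝ g] [FiniteDimensional ℝ g]
    (φ : g ≃ₗ⁅ℝ⁆ g)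
    (A : Module.End ℝ g) (hA : A = (φ.toLieHom : g →ₗ[ℝ] g) - LinearMap.id) :
    List.TFAE [
      -- (1) h = g₀
      LinearMap.ker A = ⨆ n : ℕ, LinearMap.ker (A ^ (n + 1)),
      -- (2) g = h ⊕ A(g)
      IsCompl (LinearMap.ker A) (LinearMap.range A),
      -- (3) A restricted to A(g) is injective
      ∀ X ∈ LinearMap.range A, A X = 0 → X = 0,
      -- (4) A²X = 0 → AX = 0
      ∀ X : g, A (A X) = 0 → A X = 0,
      -- (5) h = ker(φ_s − id) for the semisimple part φ_s of φ
      ∀ S : Module.End ℝ g, IsSemisimpleEnd S →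
        Commute (φ.toLieHom : g →ₗ[ℝ] g) S →
        IsNilpotent ((φ.toLieHom : g →ₗ[ℝ] g) - S) →
        LinearMap.ker A = LinearMap.ker (S - 1)] := by
  set P : Module.End ℝ g := (φ.toLieHom : g →ₗ[ℝ] g)
  have hA₁ : A = P - 1 := by rw [hA, Module.End.one_eq_id]
  have h_fitting (S : Module.End ℝ g) (hS : S.IsSemisimple) (hPS : Commute P S)
      (hnil : IsNilpotent (P - S)) : ker (S - 1) = ⨆ n : ℕ, ker (A ^ (n + 1)) :=
    hA₁ ▸ Module.End.ker_sub_one_eq_iSup_ker_pow_succ hPS hS hnil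
  tfae_have 1 ↔ 4 := Module.End.ker_eq_iSup_ker_pow_succ_iff A
  tfae_have 2 ↔ 4 :=
    (Module.End.isCompl_ker_range_iff A).trans (Module.End.disjoint_ker_range_iff A)
  tfae_have 3 ↔ 4 := ⟨fun h X hX ↦ h (A X) ⟨X, rfl⟩ hX, by rintro h _ ⟨X, rfl⟩; exact h X⟩
  tfae_have 1 → 5 := fun h₁ S hS hPS hnil ↦
    h₁.trans (h_fitting S ((isSemisimpleEnd_iff S).mp hS) hPS hnil).symm
  tfae_have 5 → 1 := by
    intro h₅
    obtain ⟨S, hS, hPS, hnil⟩ := Module.End.exists_isSemisimple_commute_isNilpotent_sub P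
    exact (h₅ S ((isSemisimpleEnd_iff S).mpr hS) hPS hnil).trans (h_fitting S hS hPS hnil)
  tfae_finish
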